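/- Let A be an m×n complex matrix of rank r with singular value decomposition A = U₁Σ₁V₁*, and B an m×n complex matrix of rank s with singular value decomposition B = Ũ₁Σ̃₁Ṽ₁*, and let E = B − A. Then ‖B† − A†‖_F² ≤ ‖B†‖₂²‖Ũ₁*U₂‖_F² + ‖A†‖₂²‖Ṽ₂*V₁‖_F² + ‖B†EA†‖_F², and ‖B† − A†‖_F² ≥ ‖Ũ₁*U₂‖_F²/‖B‖₂² + ‖Ṽ₂*V₁‖_F²/‖A‖₂² + ‖B†EA†‖_F². -/

import Mathlib

/-!
With `E = B - A`, the identity `B† - A† = B† (I - A A†) - (B† E A† + (I - B† B) A†)`, together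
with `I - A A† = U₂ U₂*` and `I - B† B = Ṽ₂ Ṽ₂*`, writes `B† - A†` through three terms of the
form `P Z Q*` with `P ∈ {Ṽ₁, Ṽ₂}` and `Q ∈ {U₁, U₂}`. They are pairwise orthogonal for the
Frobenius inner product `tr (X* Y)`, so Pythagoras gives
`‖B† - A†‖_F² = ‖B† E A†‖_F² + ‖Σ̃₁⁻¹ Ũ₁* U₂‖_F² + ‖Ṽ₂* V₁ Σ₁⁻¹‖_F²`.
Both bounds then follow from `‖X Y‖_F ≤ ‖X‖₂ ‖Y‖_F` and from `‖Σ₁⁻¹‖₂ ≤ ‖A†‖₂`, `‖Σ₁‖₂ ≤ ‖A‖₂`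
(and the same for `B`), since `Σ₁ = U₁* A V₁` and `Σ₁⁻¹ = V₁* A† U₁`.
-/

open Matrix

/-- The square of the Frobenius norm of a complex matrix. -/
noncomputable def frobSq {α β : Type*} [Fintype α] [Fintype β] (M : Matrix α β ℂ) : ℝ :=
  ∑ i, ∑ j, ‖M i j‖ ^ 2

/-- The spectral norm (ℓ²-operator norm) of a complex matrix. -/
noncomputable def spec {α β : Type*} [Fintype α] [Fintype β] [DecidableEq β]
    (M : Matrix α β ℂ) : ℝ :=
  ‖LinearMap.toContinuousLinearMap (Matrix.toEuclideanLin M)‖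

/-- `X` is the Moore–Penrose inverse of `M` (the four Penrose equations). -/
def IsMoorePenrose {α β : Type*} [Fintype α] [Fintype β]
    (M : Matrix α β ℂ) (X : Matrix β α ℂ) : Prop :=
  M * X * M = M ∧ X * M * X = X ∧ (M * X)ᴴ = M * X ∧ (X * M)ᴴ = X * M

section Frobenius

variable {l m n : Type*} [Fintype l] [Fintype m] [Fintype n]

theorem frobSq_nonneg (M : Matrix m n ℂ) : 0 ≤ frobSq M := by
  unfold frobSq; positivity

theorem frobSq_conjTranspose (M : Matrix m n ℂ) : frobSq Mᴴ = frobSq M := by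
  simp only [frobSq, conjTranspose_apply, norm_star]
  exact Finset.sum_comm

theorem frobSq_eq_sum_norm_sq_col (M : Matrix m n ℂ) :
    frobSq M = ∑ j, ‖WithLp.toLp 2 (fun i => M i j)‖ ^ 2 := by
  simp only [EuclideanSpace.norm_sq_eq]
  exact Finset.sum_comm

theorem frobSq_eq_re_trace (M : Matrix m n ℂ) : frobSq M = (trace (Mᴴ * M)).re := by
  simp only [frobSq, trace, diag_apply, mul_apply, conjTranspose_apply, Complex.star_def,
    Complex.conj_mul', Complex.re_sum, ← Complex.ofReal_pow, Complex.ofReal_re]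
  exact Finset.sum_comm

theorem frobSq_add_of_trace_eq_zero {X Y : Matrix m n ℂ} (h : trace (Xᴴ * Y) = 0) :
    frobSq (X + Y) = frobSq X + frobSq Y := by
  have h' : trace (Yᴴ * X) = 0 := by
    rw [← conjTranspose_conjTranspose X, ← conjTranspose_mul, trace_conjTranspose, h, star_zero]
  simp only [frobSq_eq_re_trace, conjTranspose_add, Matrix.add_mul, Matrix.mul_add, trace_add,
    h, h', add_zero, zero_add, Complex.add_re]

theorem frobSq_sub_of_trace_eq_zero {X Y : Matrix m n ℂ} (h : trace (Xᴴ * Y) = 0) :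
    frobSq (X - Y) = frobSq X + frobSq Y := by
  rw [sub_eq_add_neg, frobSq_add_of_trace_eq_zero (by rw [Matrix.mul_neg, trace_neg, h, neg_zero])]
  simp [frobSq]

end Frobenius

section Spectral

open scoped Matrix.Norms.L2Operator

variable {l m n : Type*} [Fintype l] [Fintype m] [Fintype n]

theorem spec_eq_l2_opNorm [DecidableEq n] (M : Matrix m n ℂ) : spec M = ‖M‖ := rfl

theorem spec_nonneg [DecidableEq n] (M : Matrix m n ℂ) : 0 ≤ spec M := norm_nonneg _

theorem spec_conjTranspose [DecidableEq m] [DecidableEq n] (M : Matrix m n ℂ) :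
    spec Mᴴ = spec M :=
  l2_opNorm_conjTranspose M

theorem spec_mul_le [DecidableEq n] [DecidableEq l] (M : Matrix m n ℂ) (N : Matrix n l ℂ) :
    spec (M * N) ≤ spec M * spec N :=
  l2_opNorm_mul M N

theorem spec_le_one_of_conjTranspose_mul_self_eq_one [DecidableEq n] {W : Matrix m n ℂ}
    (hW : Wᴴ * W = 1) : spec W ≤ 1 := by
  have h1 : ‖(1 : Matrix n n ℂ)‖ ≤ 1 := by
    rw [← diagonal_one, l2_opNorm_diagonal]
    exact pi_norm_le_iff_of_nonneg zero_le_one |>.2 fun _ => norm_one.le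
  have hWW := l2_opNorm_conjTranspose_mul_self W
  rw [hW] at hWW
  rw [spec_eq_l2_opNorm]
  nlinarith [norm_nonneg W]

theorem spec_conjTranspose_mul_mul_le {k : Type*} [Fintype k] [DecidableEq k] [DecidableEq l]
    [DecidableEq m] [DecidableEq n] {U : Matrix m k ℂ} {V : Matrix n l ℂ} (hU : Uᴴ * U = 1)
    (hV : Vᴴ * V = 1) (M : Matrix m n ℂ) : spec (Uᴴ * M * V) ≤ spec M :=
  calc spec (Uᴴ * M * V) ≤ spec (Uᴴ * M) * spec V := spec_mul_le _ _
    _ ≤ spec (Uᴴ * M) :=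
        mul_le_of_le_one_right (spec_nonneg _) (spec_le_one_of_conjTranspose_mul_self_eq_one hV)
    _ ≤ spec Uᴴ * spec M := spec_mul_le _ _
    _ ≤ spec M := mul_le_of_le_one_left (spec_nonneg _) <| by
        rw [spec_conjTranspose]; exact spec_le_one_of_conjTranspose_mul_self_eq_one hU

theorem frobSq_mul_le [DecidableEq n] (M : Matrix m n ℂ) (N : Matrix n l ℂ) :
    frobSq (M * N) ≤ spec M ^ 2 * frobSq N := by
  rw [frobSq_eq_sum_norm_sq_col, frobSq_eq_sum_norm_sq_col, Finset.mul_sum]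
  refine Finset.sum_le_sum fun j _ => ?_
  have hcol := l2_opNorm_mulVec M (WithLp.toLp 2 fun i => N i j)
  rw [← mul_pow, spec_eq_l2_opNorm]
  gcongr
  exact hcol

theorem frobSq_mul_le_right [DecidableEq l] [DecidableEq n] (N : Matrix m n ℂ)
    (M : Matrix n l ℂ) : frobSq (N * M) ≤ spec M ^ 2 * frobSq N := by
  simpa only [← frobSq_conjTranspose (N * M), conjTranspose_mul, spec_conjTranspose,
    frobSq_conjTranspose] using frobSq_mul_le Mᴴ Nᴴ

theorem frobSq_mul_le_of_spec_le [DecidableEq n] {M : Matrix m n ℂ} {c : ℝ} (hc : spec M ≤ c)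
    (N : Matrix n l ℂ) : frobSq (M * N) ≤ c ^ 2 * frobSq N :=
  (frobSq_mul_le M N).trans <|
    mul_le_mul_of_nonneg_right (pow_le_pow_left₀ (spec_nonneg M) hc 2) (frobSq_nonneg N)

theorem frobSq_mul_le_right_of_spec_le [DecidableEq l] [DecidableEq n] {M : Matrix n l ℂ}
    {c : ℝ} (hc : spec M ≤ c) (N : Matrix m n ℂ) : frobSq (N * M) ≤ c ^ 2 * frobSq N :=
  (frobSq_mul_le_right N M).trans <|
    mul_le_mul_of_nonneg_right (pow_le_pow_left₀ (spec_nonneg M) hc 2) (frobSq_nonneg N)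

theorem div_sq_le_frobSq_mul_of_mul_eq_one [DecidableEq m] {D D' : Matrix m m ℂ}
    (hD : D * D' = 1) {c : ℝ} (hc : spec D ≤ c) (X : Matrix m n ℂ) :
    frobSq X / c ^ 2 ≤ frobSq (D' * X) := by
  refine div_le_of_le_mul₀ (sq_nonneg c) (frobSq_nonneg _) ?_
  calc frobSq X = frobSq (D * (D' * X)) := by rw [← Matrix.mul_assoc, hD, Matrix.one_mul]
    _ ≤ frobSq (D' * X) * c ^ 2 := by rw [mul_comm]; exact frobSq_mul_le_of_spec_le hc _

theorem div_sq_le_frobSq_mul_right_of_mul_eq_one [DecidableEq n] {D D' : Matrix n n ℂ}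
    (hD : D' * D = 1) {c : ℝ} (hc : spec D ≤ c) (X : Matrix m n ℂ) :
    frobSq X / c ^ 2 ≤ frobSq (X * D') := by
  refine div_le_of_le_mul₀ (sq_nonneg c) (frobSq_nonneg _) ?_
  calc frobSq X = frobSq (X * D' * D) := by rw [Matrix.mul_assoc, hD, Matrix.mul_one]
    _ ≤ frobSq (X * D') * c ^ 2 := by rw [mul_comm]; exact frobSq_mul_le_right_of_spec_le hc _

theorem frobSq_mul_of_conjTranspose_mul_self_eq_one [DecidableEq n] {W : Matrix m n ℂ}
    (hW : Wᴴ * W = 1) (N : Matrix n l ℂ) : frobSq (W * N) = frobSq N := by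
  classical
  have hW1 : spec W ^ 2 ≤ 1 :=
    pow_le_one₀ (spec_nonneg W) (spec_le_one_of_conjTranspose_mul_self_eq_one hW)
  refine le_antisymm ((frobSq_mul_le W N).trans (mul_le_of_le_one_left (frobSq_nonneg N) hW1)) ?_
  calc frobSq N = frobSq (Wᴴ * (W * N)) := by rw [← Matrix.mul_assoc, hW, Matrix.one_mul]
    _ ≤ spec Wᴴ ^ 2 * frobSq (W * N) := frobSq_mul_le _ _
    _ ≤ frobSq (W * N) := by
      rw [spec_conjTranspose]; exact mul_le_of_le_one_left (frobSq_nonneg _) hW1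

theorem frobSq_mul_mul_conjTranspose {k p : Type*} [Fintype k] [Fintype p] [DecidableEq k]
    [DecidableEq p] {P : Matrix m k ℂ} {Q : Matrix n p ℂ} (hP : Pᴴ * P = 1) (hQ : Qᴴ * Q = 1)
    (Z : Matrix k p ℂ) : frobSq (P * Z * Qᴴ) = frobSq Z := by
  rw [← frobSq_conjTranspose, conjTranspose_mul, conjTranspose_conjTranspose,
    frobSq_mul_of_conjTranspose_mul_self_eq_one hQ, frobSq_conjTranspose,
    frobSq_mul_of_conjTranspose_mul_self_eq_one hP]

end Spectral

section Orthogonality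

variable {R : Type*} {m n k k' p p' : Type*} [Fintype m] [Fintype n] [Fintype k] [Fintype k']
  [Fintype p] [Fintype p']

theorem trace_conjTranspose_mul_eq_zero_of_left [Semiring R] [StarRing R] {P : Matrix m k R}
    {P' : Matrix m k' R} (h : Pᴴ * P' = 0) (Z : Matrix k p R) (Z' : Matrix k' p' R)
    (Q : Matrix n p R) (Q' : Matrix n p' R) : trace ((P * Z * Qᴴ)ᴴ * (P' * Z' * Q'ᴴ)) = 0 := by
  simp only [conjTranspose_mul, Matrix.mul_assoc]
  rw [← Matrix.mul_assoc Pᴴ, h, Matrix.zero_mul, Matrix.mul_zero, Matrix.mul_zero, trace_zero]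

theorem trace_conjTranspose_mul_eq_zero_of_right [CommSemiring R] [StarRing R]
    {Q : Matrix n p R} {Q' : Matrix n p' R} (h : Q'ᴴ * Q = 0) (Z : Matrix k p R)
    (Z' : Matrix k' p' R) (P : Matrix m k R) (P' : Matrix m k' R) :
    trace ((P * Z * Qᴴ)ᴴ * (P' * Z' * Q'ᴴ)) = 0 := by
  rw [trace_mul_comm]
  simp only [conjTranspose_mul, conjTranspose_conjTranspose, Matrix.mul_assoc]
  rw [← Matrix.mul_assoc Q'ᴴ, h, Matrix.zero_mul, Matrix.mul_zero, Matrix.mul_zero, trace_zero]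

end Orthogonality

section Blocks

variable {R : Type*} [Semiring R] [StarRing R] {m k p : Type*}

theorem conjTranspose_mul_self_eq_one_of_fromCols [Fintype m] [DecidableEq k] [DecidableEq p]
    {W₁ : Matrix m k R} {W₂ : Matrix m p R} (h : (fromCols W₁ W₂)ᴴ * fromCols W₁ W₂ = 1) :
    W₁ᴴ * W₁ = 1 ∧ W₁ᴴ * W₂ = 0 ∧ W₂ᴴ * W₂ = 1 := by
  rw [conjTranspose_fromCols_eq_fromRows_conjTranspose, fromRows_mul_fromCols,
    ← fromBlocks_one, fromBlocks_inj] at h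
  exact ⟨h.1, h.2.1, h.2.2.2⟩

theorem fromCols_mul_conjTranspose_fromCols [Fintype k] [Fintype p] (W₁ : Matrix m k R)
    (W₂ : Matrix m p R) : fromCols W₁ W₂ * (fromCols W₁ W₂)ᴴ = W₁ * W₁ᴴ + W₂ * W₂ᴴ := by
  rw [conjTranspose_fromCols_eq_fromRows_conjTranspose, fromCols_mul_fromRows]

end Blocks

section Diagonal

variable {K n : Type*} [DivisionRing K] [Fintype n] [DecidableEq n] {d : n → K}

theorem diagonal_mul_diagonal_inv (hd : ∀ i, d i ≠ 0) :
    diagonal d * diagonal (fun i => (d i)⁻¹) = 1 := by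
  rw [diagonal_mul_diagonal, ← diagonal_one]
  exact congrArg diagonal (funext fun i => mul_inv_cancel₀ (hd i))

theorem diagonal_inv_mul_diagonal (hd : ∀ i, d i ≠ 0) :
    diagonal (fun i => (d i)⁻¹) * diagonal d = 1 := by
  rw [diagonal_mul_diagonal, ← diagonal_one]
  exact congrArg diagonal (funext fun i => inv_mul_cancel₀ (hd i))

end Diagonal

section SVD

variable {m n k : Type*} [Fintype n] [Fintype k] [DecidableEq k]
  {A : Matrix m n ℂ} {U : Matrix m k ℂ} {V : Matrix n k ℂ} {S : Matrix k k ℂ}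

theorem mul_eq_mul_conjTranspose_of_svd {A' : Matrix n m ℂ} {S' : Matrix k k ℂ}
    (hV : Vᴴ * V = 1) (hS : S * S' = 1) (hA : A = U * S * Vᴴ) (hA' : A' = V * S' * Uᴴ) :
    A * A' = U * Uᴴ := by
  subst hA hA'
  simp only [Matrix.mul_assoc]
  rw [← Matrix.mul_assoc Vᴴ, hV, Matrix.one_mul, ← Matrix.mul_assoc S, hS, Matrix.one_mul]

theorem spec_le_of_svd [Fintype m] [DecidableEq m] [DecidableEq n] (hU : Uᴴ * U = 1)
    (hV : Vᴴ * V = 1) (hA : A = U * S * Vᴴ) : spec S ≤ spec A :=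
  calc spec S = spec (Uᴴ * A * V) := by
        rw [hA, ← Matrix.mul_assoc, ← Matrix.mul_assoc, hU, Matrix.one_mul, Matrix.mul_assoc, hV,
          Matrix.mul_one]
    _ ≤ spec A := spec_conjTranspose_mul_mul_le hU hV A

theorem frobSq_sub_eq_of_svd {l p q : Type*} [Fintype m] [Fintype l] [Fintype p] [Fintype q]
    [DecidableEq m] [DecidableEq n] [DecidableEq l] [DecidableEq p] [DecidableEq q]
    {B : Matrix m n ℂ} {A' B' : Matrix n m ℂ} {U₁ : Matrix m k ℂ} {U₂ : Matrix m p ℂ}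
    {V₁ : Matrix n k ℂ} {tU₁ : Matrix m l ℂ} {tV₁ : Matrix n l ℂ} {tV₂ : Matrix n q ℂ}
    {S' : Matrix k k ℂ} {T T' : Matrix l l ℂ}
    (hU : (fromCols U₁ U₂)ᴴ * fromCols U₁ U₂ = 1 ∧ fromCols U₁ U₂ * (fromCols U₁ U₂)ᴴ = 1)
    (hV₁ : V₁ᴴ * V₁ = 1) (htU₁ : tU₁ᴴ * tU₁ = 1)
    (htV : (fromCols tV₁ tV₂)ᴴ * fromCols tV₁ tV₂ = 1
      ∧ fromCols tV₁ tV₂ * (fromCols tV₁ tV₂)ᴴ = 1)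
    (hS : S * S' = 1) (hT : T' * T = 1)
    (hA : A = U₁ * S * V₁ᴴ) (hA' : A' = V₁ * S' * U₁ᴴ)
    (hB : B = tU₁ * T * tV₁ᴴ) (hB' : B' = tV₁ * T' * tU₁ᴴ) :
    frobSq (B' - A') = frobSq (B' * (B - A) * A') + frobSq (T' * (tU₁ᴴ * U₂))
      + frobSq (tV₂ᴴ * V₁ * S') := by
  obtain ⟨hU₁, hU₁₂, hU₂⟩ := conjTranspose_mul_self_eq_one_of_fromCols hU.1
  obtain ⟨htV₁, htV₁₂, htV₂⟩ := conjTranspose_mul_self_eq_one_of_fromCols htV.1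
  have hAA' : 1 - A * A' = U₂ * U₂ᴴ := by
    rw [mul_eq_mul_conjTranspose_of_svd hV₁ hS hA hA', sub_eq_iff_eq_add',
      ← fromCols_mul_conjTranspose_fromCols, hU.2]
  have hB'B : 1 - B' * B = tV₂ * tV₂ᴴ := by
    rw [mul_eq_mul_conjTranspose_of_svd htU₁ hT hB' hB, sub_eq_iff_eq_add',
      ← fromCols_mul_conjTranspose_fromCols, htV.2]
  have hdecomp : B' - A' = B' * (1 - A * A') - (B' * (B - A) * A' + (1 - B' * B) * A') := by
    simp only [Matrix.mul_sub, Matrix.sub_mul, Matrix.mul_one, Matrix.one_mul, Matrix.mul_assoc]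
    abel
  have hE : B' * (B - A) * A' = tV₁ * (T' * tU₁ᴴ * (B - A) * V₁ * S') * U₁ᴴ := by
    simp only [hA', hB', Matrix.mul_assoc]
  have h₂ : B' * (1 - A * A') = tV₁ * (T' * (tU₁ᴴ * U₂)) * U₂ᴴ := by
    rw [hAA', hB']; simp only [Matrix.mul_assoc]
  have h₃ : (1 - B' * B) * A' = tV₂ * (tV₂ᴴ * V₁ * S') * U₁ᴴ := by
    rw [hB'B, hA']; simp only [Matrix.mul_assoc]
  rw [hdecomp, h₂, h₃, frobSq_sub_of_trace_eq_zero, frobSq_add_of_trace_eq_zero,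
    frobSq_mul_mul_conjTranspose htV₁ hU₂, frobSq_mul_mul_conjTranspose htV₂ hU₁]
  · ring
  · rw [hE]
    exact trace_conjTranspose_mul_eq_zero_of_left htV₁₂ _ _ _ _
  · rw [hE, Matrix.mul_add, trace_add, trace_conjTranspose_mul_eq_zero_of_right hU₁₂ _ _ _ _,
      trace_conjTranspose_mul_eq_zero_of_left htV₁₂ _ _ _ _, add_zero]

end SVD

theorem stmt18_general {m n r s : ℕ}
    (A B : Matrix (Fin m) (Fin n) ℂ)
    (σ : Fin r → ℝ) (hσpos : ∀ i, 0 < σ i)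
    (τ : Fin s → ℝ) (hτpos : ∀ i, 0 < τ i)
    (U₁ : Matrix (Fin m) (Fin r) ℂ) (U₂ : Matrix (Fin m) (Fin (m - r)) ℂ)
    (V₁ : Matrix (Fin n) (Fin r) ℂ) (V₂ : Matrix (Fin n) (Fin (n - r)) ℂ)
    (tU₁ : Matrix (Fin m) (Fin s) ℂ) (tU₂ : Matrix (Fin m) (Fin (m - s)) ℂ)
    (tV₁ : Matrix (Fin n) (Fin s) ℂ) (tV₂ : Matrix (Fin n) (Fin (n - s)) ℂ)
    (hU : (fromCols U₁ U₂)ᴴ * fromCols U₁ U₂ = 1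
        ∧ fromCols U₁ U₂ * (fromCols U₁ U₂)ᴴ = 1)
    (hV : (fromCols V₁ V₂)ᴴ * fromCols V₁ V₂ = 1
        ∧ fromCols V₁ V₂ * (fromCols V₁ V₂)ᴴ = 1)
    (htU : (fromCols tU₁ tU₂)ᴴ * fromCols tU₁ tU₂ = 1
        ∧ fromCols tU₁ tU₂ * (fromCols tU₁ tU₂)ᴴ = 1)
    (htV : (fromCols tV₁ tV₂)ᴴ * fromCols tV₁ tV₂ = 1
        ∧ fromCols tV₁ tV₂ * (fromCols tV₁ tV₂)ᴴ = 1)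
    (hAsvd : A = U₁ * diagonal (fun i => (σ i : ℂ)) * V₁ᴴ)
    (hBsvd : B = tU₁ * diagonal (fun i => (τ i : ℂ)) * tV₁ᴴ)
    (E : Matrix (Fin m) (Fin n) ℂ) (hE : E = B - A)
    (Adag Bdag : Matrix (Fin n) (Fin m) ℂ)
    (hAdag : Adag = V₁ * diagonal (fun i => ((σ i : ℂ))⁻¹) * U₁ᴴ)
    (hBdag : Bdag = tV₁ * diagonal (fun i => ((τ i : ℂ))⁻¹) * tU₁ᴴ) :
    frobSq (Bdag - Adag)
        ≤ spec Bdag ^ 2 * frobSq (tU₁ᴴ * U₂) + spec Adag ^ 2 * frobSq (tV₂ᴴ * V₁)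
          + frobSq (Bdag * E * Adag)
    ∧ frobSq (Bdag - Adag)
        ≥ frobSq (tU₁ᴴ * U₂) / spec B ^ 2 + frobSq (tV₂ᴴ * V₁) / spec A ^ 2
          + frobSq (Bdag * E * Adag) := by
  subst hE
  have hU₁ := (conjTranspose_mul_self_eq_one_of_fromCols hU.1).1
  have hV₁ := (conjTranspose_mul_self_eq_one_of_fromCols hV.1).1
  have htU₁ := (conjTranspose_mul_self_eq_one_of_fromCols htU.1).1
  have htV₁ := (conjTranspose_mul_self_eq_one_of_fromCols htV.1).1
  have hσ : ∀ i, (σ i : ℂ) ≠ 0 := fun i => Complex.ofReal_ne_zero.2 (hσpos i).ne'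
  have hτ : ∀ i, (τ i : ℂ) ≠ 0 := fun i => Complex.ofReal_ne_zero.2 (hτpos i).ne'
  rw [frobSq_sub_eq_of_svd hU hV₁ htU₁ htV (diagonal_mul_diagonal_inv hσ)
    (diagonal_inv_mul_diagonal hτ) hAsvd hAdag hBsvd hBdag]
  constructor
  · linarith [frobSq_mul_le_of_spec_le (spec_le_of_svd htV₁ htU₁ hBdag) (tU₁ᴴ * U₂),
      frobSq_mul_le_right_of_spec_le (spec_le_of_svd hV₁ hU₁ hAdag) (tV₂ᴴ * V₁)]
  · linarith [div_sq_le_frobSq_mul_of_mul_eq_one (diagonal_mul_diagonal_inv hτ)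
        (spec_le_of_svd htU₁ htV₁ hBsvd) (tU₁ᴴ * U₂),
      div_sq_le_frobSq_mul_right_of_mul_eq_one (diagonal_inv_mul_diagonal hσ)
        (spec_le_of_svd hU₁ hV₁ hAsvd) (tV₂ᴴ * V₁)]

theorem stmt18 {m n r s : ℕ}
    (A B : Matrix (Fin m) (Fin n) ℂ)
    (hrankA : A.rank = r) (hrankB : B.rank = s)
    (σ : Fin r → ℝ) (hσmono : Antitone σ) (hσpos : ∀ i, 0 < σ i)
    (τ : Fin s → ℝ) (hτmono : Antitone τ) (hτpos : ∀ i, 0 < τ i)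
    (U₁ : Matrix (Fin m) (Fin r) ℂ) (U₂ : Matrix (Fin m) (Fin (m - r)) ℂ)
    (V₁ : Matrix (Fin n) (Fin r) ℂ) (V₂ : Matrix (Fin n) (Fin (n - r)) ℂ)
    (tU₁ : Matrix (Fin m) (Fin s) ℂ) (tU₂ : Matrix (Fin m) (Fin (m - s)) ℂ)
    (tV₁ : Matrix (Fin n) (Fin s) ℂ) (tV₂ : Matrix (Fin n) (Fin (n - s)) ℂ)
    (hU : (fromCols U₁ U₂)ᴴ * fromCols U₁ U₂ = 1
        ∧ fromCols U₁ U₂ * (fromCols U₁ U₂)ᴴ = 1)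
    (hV : (fromCols V₁ V₂)ᴴ * fromCols V₁ V₂ = 1
        ∧ fromCols V₁ V₂ * (fromCols V₁ V₂)ᴴ = 1)
    (htU : (fromCols tU₁ tU₂)ᴴ * fromCols tU₁ tU₂ = 1
        ∧ fromCols tU₁ tU₂ * (fromCols tU₁ tU₂)ᴴ = 1)
    (htV : (fromCols tV₁ tV₂)ᴴ * fromCols tV₁ tV₂ = 1
        ∧ fromCols tV₁ tV₂ * (fromCols tV₁ tV₂)ᴴ = 1)
    (hAsvd : A = U₁ * diagonal (fun i => (σ i : ℂ)) * V₁ᴴ)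
    (hBsvd : B = tU₁ * diagonal (fun i => (τ i : ℂ)) * tV₁ᴴ)
    (E : Matrix (Fin m) (Fin n) ℂ) (hE : E = B - A)
    (Adag Bdag : Matrix (Fin n) (Fin m) ℂ)
    (hAdag : Adag = V₁ * diagonal (fun i => ((σ i : ℂ))⁻¹) * U₁ᴴ)
    (hBdag : Bdag = tV₁ * diagonal (fun i => ((τ i : ℂ))⁻¹) * tU₁ᴴ) :
    frobSq (Bdag - Adag)
        ≤ spec Bdag ^ 2 * frobSq (tU₁ᴴ * U₂) + spec Adag ^ 2 * frobSq (tV₂ᴴ * V₁)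
          + frobSq (Bdag * E * Adag)
    ∧ frobSq (Bdag - Adag)
        ≥ frobSq (tU₁ᴴ * U₂) / spec B ^ 2 + frobSq (tV₂ᴴ * V₁) / spec A ^ 2
          + frobSq (Bdag * E * Adag) :=
  stmt18_general A B σ hσpos τ hτpos U₁ U₂ V₁ V₂ tU₁ tU₂ tV₁ tV₂ hU hV htU htV hAsvd hBsvd E hE Adag
    Bdag hAdag hBdag
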